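/- arXiv:1802.07978 — 3 statements merged into one kernel-verified Lean document; each statement's English description precedes it below -/
import Mathlib

section
/- For k ≥ 1 (equivalently, for odd n = 2k−1 ≥ 1), 2^{2k-4} · ∑_{p=0}^{k-2} (4p+3) · C(2p,p) / ((p+1) · 4^p) = −2^{2k-3} + ((4k−3)/2) · C(2k−2, k−1). -/
lemma two_zpow_neg_two_mul (p : ℕ) : (2:ℚ) ^ (-(2 * (p:ℤ))) = ((4:ℚ) ^ p)⁻¹ := by
  rw [zpow_neg, show (2:ℤ) * p = ((2*p : ℕ) : ℤ) by push_cast; ring, zpow_natCast, pow_mul]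
  norm_num

lemma aux_sum (m : ℕ) :
    (4:ℚ) ^ m * ∑ p ∈ Finset.range m,
        ((4 * (p : ℚ) + 3) / ((p : ℚ) + 1)) * (Nat.choose (2 * p) p : ℚ) *
          2 ^ (-(2 * (p : ℤ)))
    = -(2:ℚ) ^ (2*m+1) + 2 * (4*(m:ℚ)+1) * (Nat.choose (2*m) m : ℚ) := by
  induction m with
  | zero => simp
  | succ m ih =>
    rw [Finset.sum_range_succ, mul_add, two_zpow_neg_two_mul]
    set S : ℚ := ∑ p ∈ Finset.range m,
        ((4 * (p : ℚ) + 3) / ((p : ℚ) + 1)) * (Nat.choose (2 * p) p : ℚ) *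
          2 ^ (-(2 * (p : ℤ))) with hS
    have hcb : ((m:ℚ)+1) * (Nat.choose (2*(m+1)) (m+1) : ℚ)
        = 2*(2*(m:ℚ)+1) * (Nat.choose (2*m) m : ℚ) := by
      have h := congrArg (Nat.cast : ℕ → ℚ) (Nat.succ_mul_centralBinom_succ m)
      push_cast [Nat.centralBinom] at h
      linarith [h]
    have h0 : ((m:ℚ)+1) ≠ 0 := by positivity
    have h4 : ((4:ℚ)^m) ≠ 0 := by positivity
    field_simp
    push_cast
    linear_combination (4*((m:ℚ)+1)*4^m) * ih - (2*(4*(m:ℚ)+5)*(4:ℚ)^m) * hcb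

/-- The hypergeometric identity used for odd `n = 2k−1`:
`2^{n-3} · ∑_{p=0}^{k-2} ((4p+3)/(p+1)) · C(2p,p) · 2^{-2p}
  = −2^{n-2} + ((2n−1)/2) · C(n−1, (n−1)/2)`.
Here `C(2p,p)/(p+1)` is the Catalan number. -/
theorem catalan_weighted_partial_sum (n k : ℕ) (hk : 1 ≤ k) (hn : n = 2 * k - 1) :
    (2 : ℚ) ^ ((n : ℤ) - 3) *
        ∑ p ∈ Finset.range (k - 1),
          ((4 * (p : ℚ) + 3) / ((p : ℚ) + 1)) * (Nat.choose (2 * p) p : ℚ) *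
            2 ^ (-(2 * (p : ℤ))) =
      -(2 : ℚ) ^ ((n : ℤ) - 2) +
        ((2 * (n : ℚ) - 1) / 2) * (Nat.choose (n - 1) ((n - 1) / 2) : ℚ) := by
  have hnz : (n:ℤ) = 2*(k:ℤ) - 1 := by omega
  have hk1 : ((k-1 : ℕ):ℤ) = (k:ℤ) - 1 := by omega
  have hk1q : ((k-1 : ℕ):ℚ) = (k:ℚ) - 1 := by exact_mod_cast hk1
  have hnq : (n:ℚ) = 2*(k:ℚ) - 1 := by exact_mod_cast hnz
  have e1 : (2:ℚ) ^ ((n:ℤ) - 3) = (4:ℚ)^(k-1) / 4 := by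
    rw [show (n:ℤ) - 3 = ((2*(k-1) : ℕ):ℤ) - 2 by omega, zpow_sub₀ (by norm_num),
      zpow_natCast, pow_mul]
    norm_num
  have e2 : (2:ℚ) ^ ((n:ℤ) - 2) = (4:ℚ)^(k-1) / 2 := by
    rw [show (n:ℤ) - 2 = ((2*(k-1) : ℕ):ℤ) - 1 by omega, zpow_sub₀ (by norm_num),
      zpow_natCast, pow_mul]
    norm_num
  have e3 : Nat.choose (n-1) ((n-1)/2) = Nat.choose (2*(k-1)) (k-1) := by
    rw [show n - 1 = 2*(k-1) by omega, Nat.mul_div_cancel_left _ (by norm_num)]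
  have h := aux_sum (k-1)
  rw [hk1q, show 2*(k-1)+1 = 2*k-1 by omega] at h
  have e4 : (2:ℚ)^(2*k-1) = (4:ℚ)^(k-1) * 2 := by
    rw [show 2*k-1 = 2*(k-1)+1 by omega, pow_succ, pow_mul]
    norm_num
  rw [e4] at h
  rw [e1, e2, e3, hnq]
  linear_combination (1/4 : ℚ) * h
end

section
/- Let (W,S,c) be a Coxeter triple. The lattice of order ideals of the natural partial order (L_{w₀^c}, ≺_{w₀^c}) on the letters of the c-sorting word of the longest element is isomorphic, as a partially ordered set, to the set of c-singletons ordered by the weak order. In particular, the poset of c-singletons under weak order is a distributive lattice. -/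
/-
Let `w` be a reduced word. An order ideal `S` of the heap of `w` selects a subword `w|S`, and
moving the letters of `S` to the front by commutations gives `w ≡ w|S ++ w|Sᶜ`; so `w|S` is
reduced and a prefix of `w` up to commutations. Conversely, heap ideals can be carried along
commutation moves, so every prefix up to commutations of `w` is commutation equivalent to some
`w|S`. The left inversion sequence of `w|S` is the subsequence of that of `w` indexed by `S`;
since the left inversion sequence of a reduced word has no repetitions and, by the strong exchange
condition, lists all left inversions, position `a` lies in `S` exactly when the `a`-th reflection
of `w` is a left inversion of `π(w|S)`. Left inversions only grow along the weak order, and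
`w|S ++ w|(T \ S)` is a reduced word for `π(w|T)` when `S ⊆ T`; hence inclusion of ideals is the
weak order. The theorem follows because the greedy `c`-sorting word is reduced: each letter it
takes lowers the length of what remains by one.

Strong exchange is obtained from the standard action of `W` on `W × ZMod 2`, which tracks the parity of
the number of occurrences of a reflection in the right inversion sequence of a word.
-/

open CoxeterSystem

namespace Cambrian

variable {B : Type*} {W : Type*} [Group W]

/-- A single commutation move on words: swap two adjacent letters whose generators commute. -/
def CommStep (M : CoxeterMatrix B) (l₁ l₂ : List B) : Prop :=
  ∃ (u v : List B) (i j : B), M i j = 2 ∧ l₁ = u ++ i :: j :: v ∧ l₂ = u ++ j :: i :: v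

/-- Two words coincide up to commutations. -/
def CommEquiv (M : CoxeterMatrix B) : List B → List B → Prop :=
  Relation.ReflTransGen (CommStep M)

/-- `u` is a prefix of `v` up to commutations. -/
def IsPrefixUpToComm (M : CoxeterMatrix B) (u v : List B) : Prop :=
  ∃ v', CommEquiv M v v' ∧ u <+: v'

/-- A word representing a Coxeter element: each generator occurs exactly once. -/
def IsCoxWord (cw : List B) : Prop := cw.Nodup ∧ ∀ b : B, b ∈ cw

variable {M : CoxeterMatrix B}

/-- Greedy computation of the lexicographically first reduced subword of `c^∞`
representing a given element (fuelled recursion). -/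
noncomputable def sortAux (cs : CoxeterSystem M W) (cw : List B) :
    ℕ → List B → W → List B
  | 0, _, _ => []
  | n + 1, [], g => sortAux cs cw n cw g
  | n + 1, s :: rest, g =>
      if cs.length (cs.simple s * g) < cs.length g then
        s :: sortAux cs cw n rest (cs.simple s * g)
      else sortAux cs cw n rest g

/-- The `c`-sorting word of `w`: the lexicographically first subword of `c^∞`
that is a reduced word for `w`. -/
noncomputable def sortingWord (cs : CoxeterSystem M W) (cw : List B) (w : W) : List B :=
  sortAux cs cw ((cs.length w + 1) * (cw.length + 1)) cw w

/-- `w` is a `c`-singleton: some reduced expression of `w` is a prefix up to commutations of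
the `c`-sorting word of the longest element `w₀`. -/
def IsCSingleton (cs : CoxeterSystem M W) (cw : List B) (w₀ w : W) : Prop :=
  ∃ u : List B, cs.wordProd u = w ∧ cs.IsReduced u ∧
    IsPrefixUpToComm M u (sortingWord cs cw w₀)

/-- The cardinality `S_c` of the Cambrian acyclic domain: the number of `c`-singletons. -/
noncomputable def numSingletons (cs : CoxeterSystem M W) (cw : List B) (w₀ : W) : ℕ :=
  Nat.card {w : W // IsCSingleton cs cw w₀ w}

/-- The natural partial order (heap order) on the letters of a word `w`: one letter precedes
another if they are joined by a chain of letters, increasing in position, in which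
consecutive letters represent non-commuting generators. -/
def npo (M : CoxeterMatrix B) (w : List B) : Fin w.length → Fin w.length → Prop :=
  Relation.TransGen (fun a b => a < b ∧ M (w.get a) (w.get b) ≠ 2)

/-- An order ideal (down-set) of the natural partial order on the letters of `w`. -/
def IsOrderIdeal (M : CoxeterMatrix B) (w : List B) (I : Set (Fin w.length)) : Prop :=
  ∀ a b : Fin w.length, npo M w a b → b ∈ I → a ∈ I

/-- The (right) weak order on `W`: `u ≤ w` iff `ℓ(u) + ℓ(u⁻¹w) = ℓ(w)`. -/
def WeakLe (cs : CoxeterSystem M W) (u w : W) : Prop :=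
  cs.length u + cs.length (u⁻¹ * w) = cs.length w

end Cambrian

namespace CoxeterSystem

open scoped Classical

variable {B W : Type*} [Group W] {M : CoxeterMatrix B} (cs : CoxeterSystem M W)

local prefix:100 "s " => cs.simple

theorem commute_simple_of_eq_two {i j : B} (h : M i j = 2) : Commute (s i) (s j) := by
  have hsq : (s i * s j) * (s i * s j) = 1 := by
    rw [← sq, ← h]; exact cs.simple_mul_simple_pow i j
  calc s i * s j = (s i * s j)⁻¹ := eq_inv_of_mul_eq_one_left hsq
    _ = s j * s i := by rw [mul_inv_rev, inv_simple, inv_simple]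

theorem IsReduced.of_append_left {cs : CoxeterSystem M W} {u v : List B}
    (h : cs.IsReduced (u ++ v)) : cs.IsReduced u := by
  simpa using h.take u.length

noncomputable def reflPerm (i : B) : Equiv.Perm (W × ZMod 2) :=
  Function.Involutive.toPerm (fun p => (s i * p.1 * s i, p.2 + if p.1 = s i then 1 else 0)) <| by
    rintro ⟨t, ε⟩
    have hconj : s i * t * s i = s i ↔ t = s i := by
      constructor
      · intro h
        calc t = s i * (s i * t * s i) * s i := by simp [mul_assoc]
          _ = s i := by rw [h]; simp
      · rintro rfl; simp
    simp only [Prod.mk.injEq, hconj, add_assoc, ← two_mul]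
    refine ⟨by simp [mul_assoc], ?_⟩
    split_ifs <;> simp [CharTwo.two_eq_zero]

theorem reflPerm_apply (i : B) (t : W) (ε : ZMod 2) :
    cs.reflPerm i (t, ε) = (s i * t * s i, ε + if t = s i then 1 else 0) := rfl

theorem reflPerm_mul_reflPerm_pow_apply (i j : B) (k : ℕ) (t : W) (ε : ZMod 2) :
    ((cs.reflPerm i * cs.reflPerm j) ^ k) (t, ε) =
      ((s i * s j) ^ k * t * ((s i * s j) ^ k)⁻¹,
        ε + ∑ r ∈ Finset.range (2 * k), if t = s j * (s i * s j) ^ r then 1 else 0) := by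
  have hconj (t y : W) : s i * (s j * t * s j) * s i = y ↔ t = s j * s i * y * (s i * s j) := by
    constructor <;> rintro rfl <;> simp [mul_assoc]
  have hshift (r : ℕ) :
      s j * s i * (s j * (s i * s j) ^ r) * (s i * s j) = s j * (s i * s j) ^ (r + 2) := by
    rw [pow_succ, pow_succ']; simp only [mul_assoc]
  have hflip (t : W) : s j * t * s j = s i ↔ t = s j * (s i * s j) := by
    constructor
    · intro h; rw [← h]; simp [mul_assoc]
    · rintro rfl; simp [mul_assoc]
  induction k generalizing t ε with
  | zero => simp
  | succ k ih =>
    rw [pow_succ, Equiv.Perm.mul_apply, Equiv.Perm.mul_apply, reflPerm_apply, reflPerm_apply, ih]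
    simp only [hconj, hshift, hflip, Prod.mk.injEq]
    refine ⟨by simp [pow_succ, mul_assoc], ?_⟩
    rw [show 2 * (k + 1) = 2 * k + 1 + 1 by ring, Finset.sum_range_succ', Finset.sum_range_succ']
    simp only [pow_zero, mul_one, zero_add, pow_one]
    ring

theorem isLiftable_reflPerm : M.IsLiftable cs.reflPerm := by
  intro i j
  ext ⟨t, ε⟩ : 1
  have hcycle : (s i * s j) ^ M i j = 1 := cs.simple_mul_simple_pow i j
  -- `r ↦ s j * (s i * s j) ^ r` has period `M i j`, so every term is counted twice.
  have hcount : ∑ r ∈ Finset.range (2 * M i j),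
      (if t = s j * (s i * s j) ^ r then 1 else 0 : ZMod 2) = 0 := by
    rw [two_mul, Finset.sum_range_add]
    simp only [pow_add, hcycle, one_mul, CharTwo.add_self_eq_zero]
  rw [reflPerm_mul_reflPerm_pow_apply, hcount, hcycle]
  simp

noncomputable def reflRep : W →* Equiv.Perm (W × ZMod 2) :=
  cs.lift ⟨cs.reflPerm, cs.isLiftable_reflPerm⟩

theorem reflRep_wordProd (ω : List B) (t : W) (ε : ZMod 2) :
    cs.reflRep (cs.wordProd ω) (t, ε) =
      (cs.wordProd ω * t * (cs.wordProd ω)⁻¹,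
        ε + ((cs.rightInvSeq ω).count t : ZMod 2)) := by
  induction ω generalizing ε with
  | nil => simp
  | cons i ω ih =>
    rw [cs.wordProd_cons, map_mul, Equiv.Perm.mul_apply, ih, reflRep, cs.lift_apply_simple,
      reflPerm_apply]
    have hconj : cs.wordProd ω * t * (cs.wordProd ω)⁻¹ = s i ↔
        (cs.wordProd ω)⁻¹ * s i * cs.wordProd ω = t := by
      constructor
      · intro h; rw [← h]; group
      · rintro rfl; group
    simp only [rightInvSeq, List.count_cons, beq_iff_eq, hconj, Prod.mk.injEq]
    refine ⟨by rw [mul_inv_rev, inv_simple]; group, ?_⟩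
    push_cast
    ring

noncomputable def invParity (w t : W) : ZMod 2 := (cs.reflRep w (t, 0)).2

theorem invParity_wordProd (ω : List B) (t : W) :
    cs.invParity (cs.wordProd ω) t = (cs.rightInvSeq ω).count t := by
  simp [invParity, reflRep_wordProd]

theorem reflRep_apply (w t : W) (ε : ZMod 2) :
    cs.reflRep w (t, ε) = (w * t * w⁻¹, ε + cs.invParity w t) := by
  obtain ⟨ω, rfl⟩ := cs.wordProd_surjective w
  rw [reflRep_wordProd, invParity_wordProd]

theorem invParity_mul (x y t : W) :
    cs.invParity (x * y) t = cs.invParity x (y * t * y⁻¹) + cs.invParity y t := by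
  rw [invParity, map_mul, Equiv.Perm.mul_apply, reflRep_apply cs y, reflRep_apply, zero_add,
    add_comm]

theorem invParity_one (t : W) : cs.invParity 1 t = 0 := by
  simp [invParity]

theorem invParity_simple (i : B) : cs.invParity (s i) (s i) = 1 := by
  simpa using cs.invParity_wordProd [i] (s i)

theorem IsReflection.invParity_self {t : W} (ht : cs.IsReflection t) : cs.invParity t t = 1 := by
  obtain ⟨u, i, rfl⟩ := ht
  have hconj : u⁻¹ * (u * s i * u⁻¹) * u⁻¹⁻¹ = s i := by group
  have hcancel := cs.invParity_mul u u⁻¹ (u * s i * u⁻¹)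
  rw [mul_inv_cancel, invParity_one, hconj] at hcancel
  rw [invParity_mul, invParity_mul, hconj, mul_inv_cancel_right, invParity_simple]
  linear_combination -hcancel

theorem mem_rightInvSeq_of_isRightInversion {ω : List B} {t : W}
    (ht : cs.IsRightInversion (cs.wordProd ω) t) : t ∈ cs.rightInvSeq ω := by
  obtain ⟨τ, hτ, hτω⟩ := cs.exists_isReduced (cs.wordProd ω * t)
  have hτt : t ∉ cs.rightInvSeq τ := fun hmem => by
    have := (cs.isRightInversion_of_mem_rightInvSeq hτ hmem).2
    rw [← hτω, mul_assoc, ht.1.mul_self, mul_one] at this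
    exact ht.2.not_gt this
  have hparity : cs.invParity (cs.wordProd ω) t = 1 := by
    calc cs.invParity (cs.wordProd ω) t = cs.invParity (cs.wordProd τ * t) t := by
          rw [← hτω, mul_assoc, ht.1.mul_self, mul_one]
      _ = cs.invParity (cs.wordProd τ) t + cs.invParity t t := by
          rw [invParity_mul, mul_inv_cancel_right]
      _ = 1 := by
          rw [invParity_wordProd, List.count_eq_zero.mpr hτt, ht.1.invParity_self]; simp
  rw [invParity_wordProd] at hparity
  exact List.count_pos_iff.mp (Nat.pos_of_ne_zero fun h => by simp [h] at hparity)

theorem mem_leftInvSeq_of_isLeftInversion {ω : List B} {t : W}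
    (ht : cs.IsLeftInversion (cs.wordProd ω) t) : t ∈ cs.leftInvSeq ω := by
  rw [← cs.isRightInversion_inv_iff, ← wordProd_reverse] at ht
  simpa [rightInvSeq_reverse] using cs.mem_rightInvSeq_of_isRightInversion ht

end CoxeterSystem

namespace Cambrian

section Subword

variable {α : Type*}

open scoped Classical in
noncomputable def subword : List α → Set ℕ → List α
  | [], _ => []
  | x :: l, S =>
    if 0 ∈ S then x :: subword l ((· + 1) ⁻¹' S) else subword l ((· + 1) ⁻¹' S)

theorem subword_cons_of_mem {x : α} {l : List α} {S : Set ℕ} (h : 0 ∈ S) :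
    subword (x :: l) S = x :: subword l ((· + 1) ⁻¹' S) := by
  simp [subword, h]

theorem subword_cons_of_notMem {x : α} {l : List α} {S : Set ℕ} (h : 0 ∉ S) :
    subword (x :: l) S = subword l ((· + 1) ⁻¹' S) := by
  simp [subword, h]

theorem mem_subword {l : List α} {S : Set ℕ} {y : α} :
    y ∈ subword l S ↔ ∃ k ∈ S, ∃ hk : k < l.length, l[k] = y := by
  induction l generalizing S with
  | nil => simp [subword]
  | cons x l ih =>
    by_cases h : 0 ∈ S
    · rw [subword_cons_of_mem h, List.mem_cons, ih]
      conv_rhs => rw [← Nat.or_exists_add_one]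
      simp [h, eq_comm]
    · rw [subword_cons_of_notMem h, ih]
      conv_rhs => rw [← Nat.or_exists_add_one]
      simp [h]

theorem subword_map {β : Type*} (f : α → β) (l : List α) (S : Set ℕ) :
    subword (l.map f) S = (subword l S).map f := by
  induction l generalizing S with
  | nil => rfl
  | cons x l ih =>
    by_cases h : 0 ∈ S
    · simp [subword_cons_of_mem h, ih]
    · simp [subword_cons_of_notMem h, ih]

theorem subword_congr {l : List α} {S T : Set ℕ} (h : ∀ k < l.length, k ∈ S ↔ k ∈ T) :
    subword l S = subword l T := by
  induction l generalizing S T with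
  | nil => rfl
  | cons x l ih =>
    have ht := ih (S := (· + 1) ⁻¹' S) (T := (· + 1) ⁻¹' T) fun k hk => h (k + 1) (by simpa)
    by_cases hS : 0 ∈ S
    · rw [subword_cons_of_mem hS, subword_cons_of_mem ((h 0 (by simp)).1 hS), ht]
    · rw [subword_cons_of_notMem hS, subword_cons_of_notMem (mt (h 0 (by simp)).2 hS), ht]

theorem subword_inter_Iio_length (l : List α) (S : Set ℕ) :
    subword l (S ∩ Set.Iio l.length) = subword l S :=
  subword_congr fun k hk => by simp [hk]

theorem subword_univ (l : List α) : subword l Set.univ = l := by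
  induction l with
  | nil => rfl
  | cons x l ih => simp [subword_cons_of_mem, ih]

theorem subword_Iio (l : List α) (k : ℕ) : subword l (Set.Iio k) = l.take k := by
  induction l generalizing k with
  | nil => simp [subword]
  | cons x l ih =>
    cases k with
    | zero =>
      rw [subword_cons_of_notMem (by simp),
        show (· + 1) ⁻¹' Set.Iio 0 = Set.Iio 0 by ext; simp, ih, List.take_zero, List.take_zero]
    | succ k =>
      rw [subword_cons_of_mem (by simp),
        show (· + 1) ⁻¹' Set.Iio (k + 1) = Set.Iio k by ext; simp, ih, List.take_succ_cons]

def consSet (p : Prop) (S : Set ℕ) : Set ℕ := {n | n = 0 ∧ p} ∪ (· + 1) '' S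

@[simp] theorem zero_mem_consSet {p : Prop} {S : Set ℕ} : 0 ∈ consSet p S ↔ p := by
  simp [consSet]

@[simp] theorem preimage_consSet {p : Prop} {S : Set ℕ} : (· + 1) ⁻¹' consSet p S = S := by
  ext k; simp [consSet]

end Subword

section CommEquiv

variable {B : Type*} {M : CoxeterMatrix B}

theorem CommStep.symm {l₁ l₂ : List B} (h : CommStep M l₁ l₂) : CommStep M l₂ l₁ := by
  obtain ⟨u, v, i, j, hij, rfl, rfl⟩ := h
  exact ⟨u, v, j, i, M.symmetric i j ▸ hij, rfl, rfl⟩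

theorem CommStep.perm {l₁ l₂ : List B} (h : CommStep M l₁ l₂) : l₁.Perm l₂ := by
  obtain ⟨u, v, i, j, -, rfl, rfl⟩ := h
  exact (List.Perm.swap j i v).append_left u

theorem CommEquiv.refl (l : List B) : CommEquiv M l l := Relation.ReflTransGen.refl

theorem CommEquiv.trans {l₁ l₂ l₃ : List B} (h₁₂ : CommEquiv M l₁ l₂)
    (h₂₃ : CommEquiv M l₂ l₃) : CommEquiv M l₁ l₃ :=
  Relation.ReflTransGen.trans h₁₂ h₂₃

theorem CommEquiv.symm {l₁ l₂ : List B} (h : CommEquiv M l₁ l₂) :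
    CommEquiv M l₂ l₁ := by
  induction h with
  | refl => exact .refl _
  | tail _ hs ih => exact Relation.ReflTransGen.head hs.symm ih

theorem CommEquiv.perm {l₁ l₂ : List B} (h : CommEquiv M l₁ l₂) : l₁.Perm l₂ := by
  induction h with
  | refl => exact .refl _
  | tail _ hs ih => exact ih.trans hs.perm

theorem CommEquiv.cons (x : B) {l₁ l₂ : List B} (h : CommEquiv M l₁ l₂) :
    CommEquiv M (x :: l₁) (x :: l₂) :=
  Relation.ReflTransGen.lift (x :: ·)
    (fun _ _ ⟨u, v, i, j, hij, h₁, h₂⟩ =>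
      ⟨x :: u, v, i, j, hij, by simp [h₁], by simp [h₂]⟩) _ _ h

theorem commEquiv_append_cons {x : B} {p q : List B} (h : ∀ y ∈ p, M x y = 2) :
    CommEquiv M (p ++ x :: q) (x :: (p ++ q)) := by
  induction p with
  | nil => exact .refl _
  | cons y p ih =>
    refine ((ih fun z hz => h z (.tail y hz)).cons y).tail ?_
    exact ⟨[], p ++ q, y, x, M.symmetric x y ▸ h y (.head p), rfl, rfl⟩

variable {W : Type*} [Group W] (cs : CoxeterSystem M W)

theorem CommEquiv.wordProd_eq {l₁ l₂ : List B} (h : CommEquiv M l₁ l₂) :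
    cs.wordProd l₁ = cs.wordProd l₂ := by
  induction h with
  | refl => rfl
  | tail _ hs ih =>
    obtain ⟨u, v, i, j, hij, rfl, rfl⟩ := hs
    simp only [ih, cs.wordProd_append, cs.wordProd_cons, ← mul_assoc,
      (cs.commute_simple_of_eq_two hij).eq]

theorem CommEquiv.isReduced {u v : List B} (h : CommEquiv M u v) (hu : cs.IsReduced u) :
    cs.IsReduced v := by
  rw [CoxeterSystem.IsReduced, ← h.wordProd_eq cs, hu, h.perm.length_eq]

end CommEquiv

section Heap

variable {B : Type*} {M : CoxeterMatrix B}

variable (M) in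
/-- Order ideals of `npo M w`, as sets of positions in `ℕ` (see `isOrderIdeal_preimage_val_iff`);
it suffices to be closed under the generating relations. -/
def IsHeapIdeal (w : List B) (S : Set ℕ) : Prop :=
  ∀ ⦃a b : ℕ⦄ (hab : a < b) (hb : b < w.length),
    M (w[a]'(hab.trans hb)) w[b] ≠ 2 → b ∈ S → a ∈ S

theorem isOrderIdeal_preimage_val_iff {w : List B} {S : Set ℕ} :
    IsOrderIdeal M w (Fin.val ⁻¹' S) ↔ IsHeapIdeal M w S := by
  constructor
  · intro h a b hab hb hM hbS
    exact h ⟨a, hab.trans hb⟩ ⟨b, hb⟩ (.single ⟨hab, by simpa using hM⟩) hbS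
  · intro h a b hab
    refine Relation.TransGen.closed' (fun {a b} hab hb => ?_) hab
    exact h hab.1 b.2 (by simpa using hab.2) hb

theorem isHeapIdeal_cons_iff {x : B} {w : List B} {S : Set ℕ} :
    IsHeapIdeal M (x :: w) S ↔ IsHeapIdeal M w ((· + 1) ⁻¹' S) ∧
      (0 ∉ S → ∀ y ∈ subword w ((· + 1) ⁻¹' S), M x y = 2) := by
  constructor
  · intro hS
    refine ⟨fun a b hab hb hM hbS => hS (Nat.succ_lt_succ hab) (Nat.succ_lt_succ hb) hM hbS, ?_⟩
    intro h0 y hy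
    obtain ⟨k, hkS, hk, rfl⟩ := mem_subword.1 hy
    by_contra hM
    exact h0 (hS k.succ_pos (Nat.succ_lt_succ hk) hM hkS)
  · rintro ⟨hS, h0⟩ a b hab hb hM hbS
    obtain ⟨b, rfl⟩ := Nat.exists_eq_add_one_of_ne_zero (Nat.ne_zero_of_lt hab)
    cases a with
    | zero =>
      by_contra ha
      exact hM (h0 ha _ (mem_subword.2 ⟨b, hbS, Nat.lt_of_succ_lt_succ hb, rfl⟩))
    | succ a => exact hS (Nat.lt_of_succ_lt_succ hab) (Nat.lt_of_succ_lt_succ hb) hM hbS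

theorem commEquiv_subword_append_diff {w : List B} {S T : Set ℕ} (hS : IsHeapIdeal M w S)
    (hST : S ⊆ T) : CommEquiv M (subword w T) (subword w S ++ subword w (T \ S)) := by
  induction w generalizing S T with
  | nil => exact .refl _
  | cons x w ih =>
    rw [isHeapIdeal_cons_iff] at hS
    have ih' := ih hS.1 (Set.preimage_mono (f := (· + 1)) hST)
    by_cases h0S : 0 ∈ S
    · rw [subword_cons_of_mem (hST h0S), subword_cons_of_mem h0S,
        subword_cons_of_notMem fun h => h.2 h0S]
      exact ih'.cons x
    by_cases h0T : 0 ∈ T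
    · rw [subword_cons_of_mem h0T, subword_cons_of_notMem h0S,
        subword_cons_of_mem (show 0 ∈ T \ S from ⟨h0T, h0S⟩)]
      exact (ih'.cons x).trans (commEquiv_append_cons (hS.2 h0S)).symm
    · rw [subword_cons_of_notMem h0T, subword_cons_of_notMem h0S,
        subword_cons_of_notMem fun h => h0T h.1]
      exact ih'

theorem isPrefixUpToComm_subword {w : List B} {S : Set ℕ} (hS : IsHeapIdeal M w S) :
    IsPrefixUpToComm M (subword w S) w := by
  refine ⟨_, ?_, List.prefix_append _ (subword w (Set.univ \ S))⟩
  simpa [subword_univ] using commEquiv_subword_append_diff hS (Set.subset_univ S)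

variable (M) in
def IdealsLift (w v : List B) : Prop :=
  ∀ T, IsHeapIdeal M v T → ∃ S, IsHeapIdeal M w S ∧ CommEquiv M (subword w S) (subword v T)

theorem IdealsLift.trans {u v w : List B} (huv : IdealsLift M u v) (hvw : IdealsLift M v w) :
    IdealsLift M u w := fun T hT =>
  let ⟨S', hS', h'⟩ := hvw T hT
  let ⟨S, hS, h⟩ := huv S' hS'
  ⟨S, hS, h.trans h'⟩

theorem IdealsLift.cons (y : B) {w v : List B} (h : IdealsLift M w v) :
    IdealsLift M (y :: w) (y :: v) := by
  intro T hT
  rw [isHeapIdeal_cons_iff] at hT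
  obtain ⟨S, hS, hcomm⟩ := h _ hT.1
  refine ⟨consSet (0 ∈ T) S, ?_, ?_⟩
  · rw [isHeapIdeal_cons_iff, preimage_consSet, zero_mem_consSet]
    exact ⟨hS, fun h0 z hz => hT.2 h0 z (hcomm.perm.subset hz)⟩
  · by_cases h0 : 0 ∈ T
    · rw [subword_cons_of_mem h0, subword_cons_of_mem (zero_mem_consSet.2 h0), preimage_consSet]
      exact hcomm.cons y
    · rw [subword_cons_of_notMem h0, subword_cons_of_notMem (mt zero_mem_consSet.1 h0),
        preimage_consSet]
      exact hcomm

theorem idealsLift_swap {i j : B} (hij : M i j = 2) (r : List B) :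
    IdealsLift M (i :: j :: r) (j :: i :: r) := by
  intro T hT
  refine ⟨consSet (1 ∈ T) (consSet (0 ∈ T) ((· + 1) ⁻¹' ((· + 1) ⁻¹' T))), ?_, ?_⟩
  -- `M i j = 2`, so the conditions imposed by the first two letters do not interact.
  · simp only [isHeapIdeal_cons_iff, preimage_consSet, zero_mem_consSet] at hT ⊢
    by_cases h0 : 0 ∈ T <;> by_cases h1 : 1 ∈ T <;>
      simp_all [subword_cons_of_mem, subword_cons_of_notMem]
  · by_cases h0 : 0 ∈ T <;> by_cases h1 : 1 ∈ T <;>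
      simp [subword_cons_of_mem, subword_cons_of_notMem, h0, h1]
    exacts [.single ⟨[], _, i, j, hij, rfl, rfl⟩, .refl _, .refl _, .refl _]

theorem CommStep.idealsLift {w v : List B} (h : CommStep M w v) : IdealsLift M w v := by
  obtain ⟨u, r, i, j, hij, rfl, rfl⟩ := h
  induction u with
  | nil => exact idealsLift_swap hij r
  | cons y u ih => exact ih.cons y

theorem CommEquiv.idealsLift {w v : List B} (h : CommEquiv M w v) : IdealsLift M w v := by
  induction h with
  | refl => exact fun T hT => ⟨T, hT, .refl _⟩
  | tail _ hs ih => exact ih.trans hs.idealsLift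

theorem exists_isHeapIdeal_of_isPrefixUpToComm {u w : List B} (h : IsPrefixUpToComm M u w) :
    ∃ S, IsHeapIdeal M w S ∧ CommEquiv M (subword w S) u := by
  obtain ⟨_, hw, r, rfl⟩ := h
  have hu : IsHeapIdeal M (u ++ r) (Set.Iio u.length) := fun _ _ hab _ _ hb => hab.trans hb
  obtain ⟨S, hS, hcomm⟩ := hw.idealsLift _ hu
  exact ⟨S, hS, by rwa [subword_Iio, List.take_append_length] at hcomm⟩

end Heap

section WeakOrder

variable {B W : Type*} [Group W] {M : CoxeterMatrix B} (cs : CoxeterSystem M W)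

theorem weakLe_refl (u : W) : WeakLe cs u u := by
  simp [WeakLe]

theorem weakLe_wordProd_append {u v : List B} (h : cs.IsReduced (u ++ v)) :
    WeakLe cs (cs.wordProd u) (cs.wordProd (u ++ v)) := by
  have hv : cs.IsReduced v := by simpa using h.drop u.length
  rw [WeakLe, h.eq, cs.wordProd_append, inv_mul_cancel_left, h.of_append_left.eq, hv.eq,
    List.length_append]

theorem WeakLe.isLeftInversion {u w t : W} (h : WeakLe cs u w) (ht : cs.IsLeftInversion u t) :
    cs.IsLeftInversion w t := by
  refine ⟨ht.1, ?_⟩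
  calc cs.length (t * w) = cs.length (t * u * (u⁻¹ * w)) := by group
    _ ≤ cs.length (t * u) + cs.length (u⁻¹ * w) := cs.length_mul_le _ _
    _ < cs.length u + cs.length (u⁻¹ * w) := by have := ht.2; omega
    _ = cs.length w := h

theorem commute_of_mem_leftInvSeq {x : B} {u : List B} (h : ∀ y ∈ u, M x y = 2) :
    ∀ t ∈ cs.leftInvSeq u, Commute (cs.simple x) t := by
  induction u with
  | nil => simp
  | cons y u ih =>
    have hxy := cs.commute_simple_of_eq_two (h y (.head u))
    simp only [leftInvSeq, List.mem_cons, List.mem_map, MulAut.conj_apply]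
    rintro t (rfl | ⟨t, ht, rfl⟩)
    · exact hxy
    · exact (hxy.mul_right (ih (fun z hz => h z (.tail y hz)) t ht)).mul_right hxy.inv_right

theorem leftInvSeq_subword {w : List B} {S : Set ℕ} (hS : IsHeapIdeal M w S) :
    cs.leftInvSeq (subword w S) = subword (cs.leftInvSeq w) S := by
  induction w generalizing S with
  | nil => rfl
  | cons x w ih =>
    rw [isHeapIdeal_cons_iff] at hS
    by_cases h0 : 0 ∈ S
    · rw [subword_cons_of_mem h0, leftInvSeq, leftInvSeq, subword_cons_of_mem h0, subword_map,
        ih hS.1]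
    · rw [subword_cons_of_notMem h0, leftInvSeq, subword_cons_of_notMem h0, subword_map,
        ← ih hS.1, eq_comm, List.map_congr_left fun t ht => ?_, List.map_id]
      rw [MulAut.conj_apply, (commute_of_mem_leftInvSeq cs (hS.2 h0) t ht).eq,
        mul_inv_cancel_right]
      rfl

variable {cs} {w : List B} (hw : cs.IsReduced w)
include hw

theorem isReduced_subword {S : Set ℕ} (hS : IsHeapIdeal M w S) :
    cs.IsReduced (subword w S) := by
  have h := commEquiv_subword_append_diff hS (Set.subset_univ S)
  rw [subword_univ] at h
  exact (h.isReduced cs hw).of_append_left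

theorem weakLe_subword_of_subset {S T : Set ℕ} (hS : IsHeapIdeal M w S)
    (hT : IsHeapIdeal M w T) (hST : S ⊆ T) :
    WeakLe cs (cs.wordProd (subword w S)) (cs.wordProd (subword w T)) := by
  have h := commEquiv_subword_append_diff hS hST
  rw [h.wordProd_eq cs]
  exact weakLe_wordProd_append cs (h.isReduced cs (isReduced_subword hw hT))

theorem mem_iff_isLeftInversion {S : Set ℕ} (hS : IsHeapIdeal M w S) {a : ℕ}
    (ha : a < w.length) :
    a ∈ S ↔
      cs.IsLeftInversion (cs.wordProd (subword w S)) ((cs.leftInvSeq w)[a]'(by simpa)) := by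
  constructor
  · intro haS
    refine cs.isLeftInversion_of_mem_leftInvSeq (isReduced_subword hw hS) ?_
    rw [leftInvSeq_subword cs hS]
    exact mem_subword.2 ⟨a, haS, _, rfl⟩
  · intro h
    have hmem := cs.mem_leftInvSeq_of_isLeftInversion h
    rw [leftInvSeq_subword cs hS] at hmem
    obtain ⟨b, hbS, hb, hba⟩ := mem_subword.1 hmem
    rwa [← hw.nodup_leftInvSeq.getElem_inj_iff.1 hba]

theorem subset_iff_weakLe {S T : Set ℕ} (hS : IsHeapIdeal M w S) (hT : IsHeapIdeal M w T)
    (hSw : S ⊆ Set.Iio w.length) :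
    S ⊆ T ↔ WeakLe cs (cs.wordProd (subword w S)) (cs.wordProd (subword w T)) := by
  refine ⟨weakLe_subword_of_subset hw hS hT, fun h a ha => ?_⟩
  exact (mem_iff_isLeftInversion hw hT (hSw ha)).2
    (h.isLeftInversion cs ((mem_iff_isLeftInversion hw hS (hSw ha)).1 ha))

end WeakOrder

section SortingWord

variable {B W : Type*} [Group W] {M : CoxeterMatrix B} (cs : CoxeterSystem M W) (cw : List B)

theorem length_sortAux_add (n : ℕ) (rest : List B) (g : W) :
    (sortAux cs cw n rest g).length + cs.length ((cs.wordProd (sortAux cs cw n rest g))⁻¹ * g) =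
      cs.length g := by
  induction n generalizing rest g with
  | zero => simp [sortAux]
  | succ n ih =>
    cases rest with
    | nil => exact ih cw g
    | cons s rest =>
      rw [sortAux]
      split_ifs with hs
      · have := ih rest (cs.simple s * g)
        rw [List.length_cons, cs.wordProd_cons, mul_inv_rev, cs.inv_simple, mul_assoc]
        rcases cs.length_simple_mul g s with h | h <;> omega
      · exact ih rest g

theorem isReduced_sortAux (n : ℕ) (rest : List B) (g : W) :
    cs.IsReduced (sortAux cs cw n rest g) := by
  have hlen := length_sortAux_add cs cw n rest g
  generalize sortAux cs cw n rest g = u at hlen ⊢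
  have hsplit := cs.length_mul_le (cs.wordProd u) ((cs.wordProd u)⁻¹ * g)
  rw [mul_inv_cancel_left] at hsplit
  have := cs.length_wordProd_le u
  rw [CoxeterSystem.IsReduced]
  omega

theorem isReduced_sortingWord (w : W) : cs.IsReduced (sortingWord cs cw w) :=
  isReduced_sortAux cs cw _ cw w

end SortingWord

section Equiv

variable {B W : Type*} [Group W] {M : CoxeterMatrix B} {cs : CoxeterSystem M W}

theorem exists_orderIdeals_equiv_prefixesUpToComm {w : List B} (hw : cs.IsReduced w) :
    ∃ φ : {I : Set (Fin w.length) // IsOrderIdeal M w I} ≃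
          {v : W // ∃ u, cs.wordProd u = v ∧ cs.IsReduced u ∧ IsPrefixUpToComm M u w},
      ∀ I J, I.val ⊆ J.val ↔ WeakLe cs (φ I).val (φ J).val := by
  have hideal (I : {I : Set (Fin w.length) // IsOrderIdeal M w I}) :
      IsHeapIdeal M w (Fin.val '' I.val) := by
    rw [← isOrderIdeal_preimage_val_iff, Set.preimage_image_eq _ Fin.val_injective]
    exact I.2
  let φ (I : {I : Set (Fin w.length) // IsOrderIdeal M w I}) :
      {v : W // ∃ u, cs.wordProd u = v ∧ cs.IsReduced u ∧ IsPrefixUpToComm M u w} :=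
    ⟨_, _, rfl, isReduced_subword hw (hideal I), isPrefixUpToComm_subword (hideal I)⟩
  have hφ (I J) : I.val ⊆ J.val ↔ WeakLe cs (φ I).val (φ J).val := by
    rw [← Set.image_subset_image_iff Fin.val_injective]
    exact subset_iff_weakLe hw (hideal I) (hideal J) (by rintro _ ⟨a, -, rfl⟩; exact a.2)
  refine ⟨Equiv.ofBijective φ ⟨fun I J h => ?_, ?_⟩, hφ⟩
  · exact Subtype.ext <| ((hφ I J).2 (h ▸ weakLe_refl cs _)).antisymm
      ((hφ J I).2 (h ▸ weakLe_refl cs _))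
  · rintro ⟨_, u, rfl, -, hu⟩
    obtain ⟨S, hS, hcomm⟩ := exists_isHeapIdeal_of_isPrefixUpToComm hu
    refine ⟨⟨Fin.val ⁻¹' S, isOrderIdeal_preimage_val_iff.2 hS⟩, Subtype.ext ?_⟩
    change cs.wordProd (subword w (Fin.val '' (Fin.val ⁻¹' S))) = cs.wordProd u
    rw [Set.image_preimage_eq_inter_range, Fin.range_val, subword_inter_Iio_length,
      hcomm.wordProd_eq cs]

theorem orderIdeals_equiv_cSingletons_general {B W : Type*} [Group W]
    (M : CoxeterMatrix B) (cs : CoxeterSystem M W)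
    (cw : List B)
    (w₀ : W) :
    ∃ φ : {I : Set (Fin (sortingWord cs cw w₀).length) //
            IsOrderIdeal M (sortingWord cs cw w₀) I} ≃
          {w : W // IsCSingleton cs cw w₀ w},
      ∀ I J, I.val ⊆ J.val ↔ WeakLe cs (φ I).val (φ J).val :=
  exists_orderIdeals_equiv_prefixesUpToComm (isReduced_sortingWord cs cw w₀)

/-- The lattice of order ideals of the natural partial order on the letters of the
`c`-sorting word of the longest element `w₀` is isomorphic, as a poset, to the set of
`c`-singletons ordered by the weak order. -/
theorem orderIdeals_equiv_cSingletons {B W : Type*} [Group W]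
    (M : CoxeterMatrix B) (cs : CoxeterSystem M W)
    (cw : List B) (hcw : IsCoxWord cw)
    (w₀ : W) (hw₀ : ∀ v : W, cs.length v ≤ cs.length w₀) :
    ∃ φ : {I : Set (Fin (sortingWord cs cw w₀).length) //
            IsOrderIdeal M (sortingWord cs cw w₀) I} ≃
          {w : W // IsCSingleton cs cw w₀ w},
      ∀ I J, I.val ⊆ J.val ↔ WeakLe cs (φ I).val (φ J).val :=
  orderIdeals_equiv_cSingletons_general M cs cw w₀

end Equiv

end Cambrian
end

section
/- Let Γ be a tree on n ≥ 2 vertices whose vertices are ordered along a fixed structure as in a finite irreducible Coxeter graph, and let f : V(Γ) → ℤ satisfy |f(s) − f(t)| = 1 for every edge {s,t} (a cut function). If f has fewer than n local extrema (vertices s such that f(s) is strictly greater than, or strictly less than, f(t) for all neighbors t), then the modified function f' that decreases f by 2 exactly on the vertices attaining the maximum value of f is again a cut function and has strictly more local extrema than f. -/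
/-- A cut function on a graph: an integer-valued function changing by exactly `1`
along every edge. -/
def IsCutFunction {V : Type*} (G : SimpleGraph V) (f : V → ℤ) : Prop :=
  ∀ u v : V, G.Adj u v → |f u - f v| = 1

/-- A vertex `s` is a (local) extremum of `f` if `f s` is strictly greater than, or strictly
less than, `f t` for all neighbours `t` of `s`. -/
def IsExtremum {V : Type*} (G : SimpleGraph V) (f : V → ℤ) (s : V) : Prop :=
  (∀ t : V, G.Adj s t → f s < f t) ∨ (∀ t : V, G.Adj s t → f t < f s)

/-- Key step in the proof that bipartite Coxeter elements minimize the number of crossing cut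
functions: if a cut function `f` on a tree `Γ` with `n ≥ 2` vertices has fewer than `n`
local extrema, then the function `f'` obtained from `f` by decreasing `f` by `2` exactly on
the vertices attaining the maximum value of `f` is again a cut function and has strictly
more local extrema than `f`. -/
theorem cut_function_maximum_shift {V : Type*} [Fintype V] [Nonempty V]
    (G : SimpleGraph V) (hG : G.IsTree) (n : ℕ) (hn : Fintype.card V = n) (hn2 : 2 ≤ n)
    (f : V → ℤ) (hf : IsCutFunction G f)
    (hext : Nat.card {s : V // IsExtremum G f s} < n) :
    IsCutFunction G
        (fun s => if f s = Finset.univ.sup' Finset.univ_nonempty f then f s - 2 else f s) ∧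
      Nat.card {s : V // IsExtremum G f s} <
        Nat.card {s : V //
          IsExtremum G
            (fun s => if f s = Finset.univ.sup' Finset.univ_nonempty f then f s - 2 else f s)
            s} := by
  classical
  set M := Finset.univ.sup' Finset.univ_nonempty f with hMdef
  have hM : ∀ v, f v ≤ M := fun v => Finset.le_sup' f (Finset.mem_univ v)
  obtain ⟨m, -, hm⟩ := Finset.exists_mem_eq_sup' Finset.univ_nonempty f
  have hadj : ∀ u v, G.Adj u v → f v = f u + 1 ∨ f v = f u - 1 := by
    intro u v h
    have h1 := hf u v h
    rcases (abs_eq (by norm_num : (0:ℤ) ≤ 1)).mp h1 with h2 | h2 <;> omega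
  set f' : V → ℤ := fun s => if f s = M then f s - 2 else f s with hf'def
  have hf'v : ∀ v, f' v = if f v = M then f v - 2 else f v := fun v => rfl
  have part1 : IsCutFunction G f' := by
    intro u v h
    have h1 := hadj u v h
    have hu := hM u; have hv := hM v
    simp only [hf'v]
    rw [abs_eq (by norm_num : (0:ℤ) ≤ 1)]
    split_ifs <;> omega
  have preserve : ∀ s, IsExtremum G f s → IsExtremum G f' s := by
    intro s hs
    rcases hs with hmin | hmax
    · by_cases hsM : f s = M
      · refine Or.inl fun t ht => absurd (hmin t ht) ?_
        have := hM t; omega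
      · by_cases hsM1 : f s = M - 1
        · refine Or.inr fun t ht => ?_
          have h1 := hmin t ht
          have h2 := hM t
          have h3 := hadj s t ht
          simp only [hf'v]
          split_ifs <;> omega
        · refine Or.inl fun t ht => ?_
          have h1 := hmin t ht
          have h2 := hM t
          have h3 := hadj s t ht
          simp only [hf'v]
          split_ifs <;> omega
    · by_cases hsM : f s = M
      · refine Or.inl fun t ht => ?_
        have h1 := hmax t ht
        have h2 := hM t
        have h3 := hadj s t ht
        simp only [hf'v]
        split_ifs <;> omega
      · refine Or.inr fun t ht => ?_
        have h1 := hmax t ht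
        have h2 := hM s
        have h3 := hadj s t ht
        simp only [hf'v]
        split_ifs <;> omega
  -- there is a non-extremum of f with value M - 1
  have key : ∃ t₀, ¬ IsExtremum G f t₀ ∧ f t₀ = M - 1 := by
    by_contra hcon
    push_neg at hcon
    have hstep : ∀ u w : V, (f u = M ∨ (f u = M - 1 ∧ ∃ u', G.Adj u u' ∧ f u' = M)) →
        G.Adj u w → (f w = M ∨ (f w = M - 1 ∧ ∃ u', G.Adj w u' ∧ f u' = M)) := by
      intro u w hu h
      rcases hu with huM | ⟨huM1, u', hadj', hu'M⟩
      · refine Or.inr ⟨?_, u, h.symm, huM⟩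
        have h1 := hadj u w h
        have h2 := hM w
        omega
      · have huext : IsExtremum G f u := by
          by_contra hne
          exact hcon u hne huM1
        rcases huext with humin | humax
        · refine Or.inl ?_
          have h1 := humin w h
          have h2 := hM w
          have h3 := hadj u w h
          omega
        · exfalso
          have h1 := humax u' hadj'
          omega
    have hS : ∀ v, f v = M ∨ (f v = M - 1 ∧ ∃ u', G.Adj v u' ∧ f u' = M) := by
      intro v
      obtain ⟨p⟩ := hG.isConnected.preconnected m v
      have : ∀ (a b : V) (q : G.Walk a b),
          (f a = M ∨ (f a = M - 1 ∧ ∃ u', G.Adj a u' ∧ f u' = M)) →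
          (f b = M ∨ (f b = M - 1 ∧ ∃ u', G.Adj b u' ∧ f u' = M)) := by
        intro a b q
        induction q with
        | nil => exact fun h => h
        | cons h q ih => exact fun ha => ih (hstep _ _ ha h)
      exact this m v p (Or.inl hm.symm)
    have hall : ∀ v, IsExtremum G f v := by
      intro v
      rcases hS v with hvM | ⟨hvM1, -⟩
      · refine Or.inr fun t ht => ?_
        have h1 := hadj v t ht
        have h2 := hM t
        omega
      · by_contra hne
        exact hcon v hne hvM1
    have : Nat.card {s : V // IsExtremum G f s} = n := by
      rw [Nat.card_congr (Equiv.subtypeUnivEquiv hall), Nat.card_eq_fintype_card, hn]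
    omega
  refine ⟨part1, ?_⟩
  obtain ⟨t₀, ht₀ne, ht₀M⟩ := key
  have ht₀' : IsExtremum G f' t₀ := by
    refine Or.inr fun t ht => ?_
    have h1 := hadj t₀ t ht
    have h2 := hM t
    simp only [hf'v]
    split_ifs <;> omega
  have hsub : {s : V | IsExtremum G f s} ⊂ {s : V | IsExtremum G f' s} := by
    refine ⟨fun s hs => preserve s hs, fun h => ht₀ne (h ht₀')⟩
  have hlt := Set.ncard_lt_ncard hsub (Set.toFinite _)
  rw [← Nat.card_coe_set_eq, ← Nat.card_coe_set_eq] at hlt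
  exact hlt
end
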